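/- arXiv:2106.13826 — 2 statements merged into one kernel-verified Lean document; each statement's English description precedes it below -/
import Mathlib

section
/- Let l be a linear term with l ∉ X and s a linear term. If m : l° → s° is a monomorphism in the category of Σ°-labeled graphs with label-nondecreasing premorphisms, then s = C[lσ] for some context C and substitution σ; moreover, the position of the vertex m(root(l°)) in s° equals the position of the hole in C. -/
open CategoryTheory
open Classical

noncomputable section

/-- Labeled graphs over a label type `W`. -/
structure LGraph (W : Type) : Type 1 where
  V : Type
  E : Type
  src : E → V
  tgt : E → V
  lV : V → W
  lE : E → W

section Cat

variable {W : Type} [Preorder W]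

/-- Label-nondecreasing graph premorphisms: the morphisms of the category `Graph^(L,≤)`. -/
structure GLHom (G H : LGraph W) : Type where
  onV : G.V → H.V
  onE : G.E → H.E
  src_comm : ∀ e, H.src (onE e) = onV (G.src e)
  tgt_comm : ∀ e, H.tgt (onE e) = onV (G.tgt e)
  lV_le : ∀ v, G.lV v ≤ H.lV (onV v)
  lE_le : ∀ e, G.lE e ≤ H.lE (onE e)

theorem GLHom.ext' {G H : LGraph W} {f g : GLHom G H}
    (h1 : f.onV = g.onV) (h2 : f.onE = g.onE) : f = g := by
  cases f; cases g
  cases h1; cases h2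
  rfl

/-- The category `Graph^(L,≤)` of labeled graphs over a preordered label set. -/
instance : Category (LGraph W) where
  Hom G H := GLHom G H
  id G := { onV := id, onE := id, src_comm := fun _ => rfl, tgt_comm := fun _ => rfl,
            lV_le := fun _ => le_refl _, lE_le := fun _ => le_refl _ }
  comp f g :=
    { onV := g.onV ∘ f.onV
      onE := g.onE ∘ f.onE
      src_comm := fun e => by
        simp only [Function.comp_apply, g.src_comm, f.src_comm]
      tgt_comm := fun e => by
        simp only [Function.comp_apply, g.tgt_comm, f.tgt_comm]
      lV_le := fun v => le_trans (f.lV_le v) (g.lV_le _)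
      lE_le := fun e => le_trans (f.lE_le e) (g.lE_le _) }
  id_comp f := GLHom.ext' rfl rfl
  comp_id f := GLHom.ext' rfl rfl
  assoc f g h := GLHom.ext' rfl rfl

/-- Vertex map of a morphism. -/
abbrev homV {G H : LGraph W} (f : G ⟶ H) : G.V → H.V := GLHom.onV f

/-- Edge map of a morphism. -/
abbrev homE {G H : LGraph W} (f : G ⟶ H) : G.E → H.E := GLHom.onE f

end Cat

/-- A graph is finite if it has finitely many vertices and edges. -/
def FiniteG {W : Type} (G : LGraph W) : Prop := Finite G.V ∧ Finite G.E
/-- The flat lattice on a base label set `A`: a global minimum `⊥`, a global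
maximum `⊤`, and all elements of `A` pairwise incomparable. -/
inductive Flat (A : Type) : Type
  | bot : Flat A
  | el : A → Flat A
  | top : Flat A

namespace Flat

def le {A : Type} : Flat A → Flat A → Prop
  | bot, _ => True
  | _, top => True
  | el a, el b => a = b
  | _, _ => False

instance (A : Type) : Preorder (Flat A) where
  le := Flat.le
  le_refl a := by cases a <;> trivial
  le_trans a b c hab hbc := by
    cases a <;> cases b <;> cases c <;> simp_all [Flat.le]

theorem bot_le {A : Type} (a : Flat A) : (Flat.bot : Flat A) ≤ a := by
  show Flat.le Flat.bot a
  cases a <;> trivial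

theorem le_top {A : Type} (a : Flat A) : a ≤ (Flat.top : Flat A) := by
  show Flat.le a Flat.top
  cases a <;> trivial

theorem le_cases {A : Type} {a b : Flat A} (h : a = Flat.bot ∨ b = Flat.top) : a ≤ b := by
  rcases h with h | h
  · subst h; exact bot_le _
  · subst h; exact le_top _

end Flat

/-- The flat lattice `Σ°` induced by a signature `S` together with the
positive natural numbers (used as edge labels). -/
abbrev FlatL (S : Type) := Flat (S ⊕ ℕ+)
/-- First-order terms over a signature `S` with arity function `ar` and
variable set `X`. -/
inductive Term (S : Type) (ar : S → ℕ) (X : Type) : Type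
  | var : X → Term S ar X
  | app : (f : S) → (Fin (ar f) → Term S ar X) → Term S ar X

namespace Term

variable {S : Type} {ar : S → ℕ} {X : Type}

/-- The subterm of `t` at a position (a list of (0-based) child indices),
if the position exists in `t`. -/
def sub? : Term S ar X → List ℕ → Option (Term S ar X)
  | t, [] => some t
  | .var _, _ :: _ => none
  | .app f ts, i :: p => if h : i < ar f then sub? (ts ⟨i, h⟩) p else none

/-- The set of variables occurring in a term. -/
def vars (t : Term S ar X) : Set X := {x | ∃ p, t.sub? p = some (.var x)}

/-- A term is linear if every variable occurs at most once in it. -/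
def Linear (t : Term S ar X) : Prop :=
  ∀ x p q, t.sub? p = some (.var x) → t.sub? q = some (.var x) → p = q

/-- The head symbol of a term, if any. -/
def head? : Term S ar X → Option S
  | .var _ => none
  | .app f _ => some f

/-- The function symbol at position `p` of `t`, if any. -/
def symAt (t : Term S ar X) (p : List ℕ) : Option S := (t.sub? p).bind head?

theorem sub?_append (t : Term S ar X) (p q : List ℕ) :
    t.sub? (p ++ q) = (t.sub? p).bind (fun s => s.sub? q) := by
  induction p generalizing t with
  | nil => simp [sub?]
  | cons i p ih =>
    cases t with
    | var x => simp [sub?]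
    | app f ts =>
      show sub? (.app f ts) (i :: (p ++ q)) = _
      simp only [sub?]
      by_cases h : i < ar f
      · simp [h, ih]
      · simp [h]

theorem symAt_sub (t : Term S ar X) {p : List ℕ} {f : S} (h : t.symAt p = some f) :
    ∃ ts : Fin (ar f) → Term S ar X, t.sub? p = some (.app f ts) := by
  unfold symAt at h
  cases hs : t.sub? p with
  | none => rw [hs] at h; simp at h
  | some s =>
    rw [hs] at h
    cases s with
    | var x => simp [head?] at h
    | app g ts =>
      simp [head?] at h
      subst h
      exact ⟨ts, rfl⟩

theorem edge_sub?_isSome (t : Term S ar X) {p : List ℕ} {i : ℕ}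
    (h : ∃ f, t.symAt p = some f ∧ i < ar f) :
    ∃ s, t.sub? (p ++ [i]) = some s := by
  obtain ⟨f, hf, hi⟩ := h
  obtain ⟨ts, hts⟩ := t.symAt_sub hf
  refine ⟨ts ⟨i, hi⟩, ?_⟩
  rw [sub?_append, hts]
  simp [sub?, hi]

theorem edge_tgt_var (t : Term S ar X) {p : List ℕ} {i : ℕ}
    (h : ∃ f, t.symAt p = some f ∧ i < ar f)
    (hn : ¬ (t.symAt (p ++ [i])).isSome) :
    ∃ x, t.sub? (p ++ [i]) = some (.var x) := by
  obtain ⟨s, hs⟩ := t.edge_sub?_isSome h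
  cases s with
  | var x => exact ⟨x, hs⟩
  | app g ts => exact absurd (by simp [symAt, hs, head?]) hn

theorem root_var (t : Term S ar X) (h : ¬ (t.symAt []).isSome) :
    ∃ x, t.sub? [] = some (.var x) := by
  cases t with
  | var x => exact ⟨x, rfl⟩
  | app f ts => exact absurd (by simp [symAt, sub?, head?]) h

/-- Vertices of the term encoding: symbol vertices (named by their position)
and variable heads (named by their variable). -/
def encV (t : Term S ar X) : Type :=
  {p : List ℕ // (t.symAt p).isSome} ⊕ {x : X // x ∈ t.vars}

/-- Edges of the term encoding: pairs of a symbol position and a child index. -/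
def encE (t : Term S ar X) : Type :=
  {pi : List ℕ × ℕ // ∃ f, t.symAt pi.1 = some f ∧ pi.2 < ar f}

/-- Target of an edge of the term encoding. -/
noncomputable def encTgt (t : Term S ar X) (e : t.encE) : t.encV :=
  if h : (t.symAt (e.1.1 ++ [e.1.2])).isSome then Sum.inl ⟨e.1.1 ++ [e.1.2], h⟩
  else Sum.inr ⟨Classical.choose (t.edge_tgt_var e.2 h),
    ⟨e.1.1 ++ [e.1.2], Classical.choose_spec (t.edge_tgt_var e.2 h)⟩⟩

/-- The term encoding `t°` of a term `t` as a `Σ°`-labeled graph. -/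
noncomputable def enc (t : Term S ar X) : LGraph (FlatL S) where
  V := t.encV
  E := t.encE
  src e := Sum.inl ⟨e.1.1, by obtain ⟨f, hf, _⟩ := e.2; simp [hf]⟩
  tgt := t.encTgt
  lV v := match v with
    | .inl q => (t.symAt q.1).elim Flat.bot (fun f => Flat.el (Sum.inl f))
    | .inr _ => Flat.bot
  lE e := Flat.el (Sum.inr ⟨e.1.2 + 1, Nat.succ_pos _⟩)

/-- The root of the term encoding (the vertex at position `ε`). -/
noncomputable def encRoot (t : Term S ar X) : t.encV :=
  if h : (t.symAt []).isSome then Sum.inl ⟨[], h⟩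
  else Sum.inr ⟨Classical.choose (t.root_var h), ⟨[], Classical.choose_spec (t.root_var h)⟩⟩

/-- `t.encVertAt p v` says that `v` is the vertex at position `p` in the term
encoding `t°`. -/
def encVertAt (t : Term S ar X) (p : List ℕ) : t.encV → Prop
  | .inl q => q.1 = p
  | .inr x => t.sub? p = some (.var x.1)

/-- The set of variable heads of a term encoding. -/
def varHeads (t : Term S ar X) : Set t.encV := Set.range Sum.inr

/-- Applying a substitution to a term. -/
def subst (σ : X → Term S ar X) : Term S ar X → Term S ar X
  | .var x => σ x
  | .app f ts => .app f (fun i => subst σ (ts i))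

end Term

/-- One-hole contexts over a signature. `app f i ts C` is the context
`f(ts 0, …, C, …, ts (n-1))` with `C` at argument position `i`. -/
inductive Ctx (S : Type) (ar : S → ℕ) (X : Type) : Type
  | hole : Ctx S ar X
  | app : (f : S) → (i : Fin (ar f)) → (Fin (ar f) → Term S ar X) → Ctx S ar X → Ctx S ar X

namespace Ctx

variable {S : Type} {ar : S → ℕ} {X : Type}

/-- Replacing the hole of a context by a term. -/
def fill : Ctx S ar X → Term S ar X → Term S ar X
  | .hole, t => t
  | .app f i ts C, t => .app f (Function.update ts i (C.fill t))

/-- The position of the hole of a context. -/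
def holePos : Ctx S ar X → List ℕ
  | .hole => []
  | .app _ i _ C => (i : ℕ) :: C.holePos

end Ctx

/-- A term rewrite rule `lhs → rhs`: `lhs` is not a variable and all variables
of `rhs` occur in `lhs`. -/
structure TRSRule (S : Type) (ar : S → ℕ) (X : Type) : Type where
  lhs : Term S ar X
  rhs : Term S ar X
  lhs_not_var : ∀ x, lhs ≠ Term.var x
  var_cond : rhs.vars ⊆ lhs.vars

namespace TRSRule

variable {S : Type} {ar : S → ℕ} {X : Type}

/-- A rule is linear if both sides are linear terms. -/
def Linear (ρ : TRSRule S ar X) : Prop := ρ.lhs.Linear ∧ ρ.rhs.Linear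

/-- The rewrite step relation generated by a single rule. -/
def Step (ρ : TRSRule S ar X) (s t : Term S ar X) : Prop :=
  ∃ (C : Ctx S ar X) (σ : X → Term S ar X),
    s = C.fill (ρ.lhs.subst σ) ∧ t = C.fill (ρ.rhs.subst σ)

/-- The rewrite step relation of a rule at a fixed position `p`. -/
def StepAt (ρ : TRSRule S ar X) (p : List ℕ) (s t : Term S ar X) : Prop :=
  ∃ (C : Ctx S ar X) (σ : X → Term S ar X),
    C.holePos = p ∧ s = C.fill (ρ.lhs.subst σ) ∧ t = C.fill (ρ.rhs.subst σ)

end TRSRule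

/-- The rewrite relation of a term rewriting system. -/
def TStep {S : Type} {ar : S → ℕ} {X : Type} (Rs : Set (TRSRule S ar X))
    (s t : Term S ar X) : Prop :=
  ∃ ρ ∈ Rs, ρ.Step s t
section Closures

variable {A : Type}

/-- Upper context closure `C[G]` of a graph rooted at `r`: adds a `⊤`-labeled
context vertex with a `⊤`-labeled edge to the root and a `⊤`-labeled loop. -/
def upperCC (G : LGraph (Flat A)) (r : G.V) : LGraph (Flat A) where
  V := G.V ⊕ Unit
  E := G.E ⊕ Bool
  src e := match e with
    | .inl e => .inl (G.src e)
    | .inr _ => .inr ()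
  tgt e := match e with
    | .inl e => .inl (G.tgt e)
    | .inr true => .inl r
    | .inr false => .inr ()
  lV v := match v with
    | .inl v => G.lV v
    | .inr _ => Flat.top
  lE e := match e with
    | .inl e => G.lE e
    | .inr _ => Flat.top

/-- Lower context closure `G↓_Xs`: relabels every vertex in `Xs` to `⊤` and
adds for it a fresh `⊤`-labeled vertex `x'` with a `⊤`-labeled edge `x → x'`
and a `⊤`-labeled loop on `x'`. -/
noncomputable def lowerCC (G : LGraph (Flat A)) (Xs : Set G.V) : LGraph (Flat A) where
  V := G.V ⊕ Xs
  E := G.E ⊕ (Xs ⊕ Xs)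
  src e := match e with
    | .inl e => .inl (G.src e)
    | .inr (.inl x) => .inl x.1
    | .inr (.inr x) => .inr x
  tgt e := match e with
    | .inl e => .inl (G.tgt e)
    | .inr (.inl x) => .inr x
    | .inr (.inr x) => .inr x
  lV v := match v with
    | .inl v => if v ∈ Xs then Flat.top else G.lV v
    | .inr _ => Flat.top
  lE e := match e with
    | .inl e => G.lE e
    | .inr _ => Flat.top

/-- The context closure `C[G↓_Xs]` of a rooted graph. -/
noncomputable def ctxCC (G : LGraph (Flat A)) (r : G.V) (Xs : Set G.V) : LGraph (Flat A) :=
  upperCC (lowerCC G Xs) (Sum.inl r)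

theorem ctxCC_lV_inl (G : LGraph (Flat A)) (r : G.V) (Xs : Set G.V) (v : G.V) :
    (ctxCC G r Xs).lV (Sum.inl (Sum.inl v)) = if v ∈ Xs then Flat.top else G.lV v := rfl

/-- The typing morphism `G ↣ C[G↓_Xs]` (an inclusion). -/
noncomputable def tCC (G : LGraph (Flat A)) (r : G.V) (Xs : Set G.V) :
    GLHom G (ctxCC G r Xs) where
  onV v := Sum.inl (Sum.inl v)
  onE e := Sum.inl (Sum.inl e)
  src_comm e := rfl
  tgt_comm e := rfl
  lV_le v := by
    rw [ctxCC_lV_inl]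
    split
    · exact Flat.le_top _
    · exact le_refl _
  lE_le e := le_refl _

end Closures

/-- The interface graph `I(t)` of a term `t`: a discrete graph with
`⊥`-labeled vertices `Var(t) ∪ {ε}`. -/
def interfaceG {S : Type} {ar : S → ℕ} {X : Type} (t : Term S ar X) : LGraph (FlatL S) where
  V := {x : X // x ∈ t.vars} ⊕ Unit
  E := Empty
  src e := e.elim
  tgt e := e.elim
  lV _ := Flat.bot
  lE e := e.elim

/-- The variable vertices of an interface graph. -/
def interfaceVars {S : Type} {ar : S → ℕ} {X : Type} (t : Term S ar X) :
    Set (interfaceG t).V := Set.range Sum.inl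
/-- A PBPO⁺ rewrite rule. -/
structure PBPORule (W : Type) [Preorder W] : Type 1 where
  L : LGraph W
  K : LGraph W
  R : LGraph W
  L' : LGraph W
  K' : LGraph W
  l : K ⟶ L
  r : K ⟶ R
  l' : K' ⟶ L'
  tL : L ⟶ L'
  tK : K ⟶ K'

/-- A PBPO⁺ rewrite step `G_L ⇒_ρ^α G_R`, consisting of a monic match `m`, an
adherence morphism `α` making the match square a pullback, the pullback `G_K`
of `α` along `l'`, and the pushout `G_R` of `r` along `u`. -/
structure RewriteStep {W : Type} [Preorder W] (ρ : PBPORule W) (G₀ G₁ : LGraph W) :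
    Type 1 where
  m : ρ.L ⟶ G₀
  mono_m : Mono m
  α : G₀ ⟶ ρ.L'
  matchPB : IsPullback (𝟙 ρ.L) m ρ.tL α
  GK : LGraph W
  gL : GK ⟶ G₀
  u' : GK ⟶ ρ.K'
  pbK : IsPullback gL u' α ρ.l'
  u : ρ.K ⟶ GK
  u_u' : u ≫ u' = ρ.tK
  u_gL : u ≫ gL = ρ.l ≫ m
  w : ρ.R ⟶ G₁
  gR : GK ⟶ G₁
  po : IsPushout ρ.r u w gR

/-- `G ⇒_ρ H` : there exists a PBPO⁺ rewrite step from `G` to `H` via `ρ`. -/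
def PBPOStep {W : Type} [Preorder W] (ρ : PBPORule W) (G H : LGraph W) : Prop :=
  Nonempty (RewriteStep ρ G H)

/-- A match `m` establishes a match (of the rule `ρ`) if it is monic and some
adherence morphism makes the match square a pullback. -/
def EstablishesMatch {W : Type} [Preorder W] (ρ : PBPORule W) {G : LGraph W}
    (m : ρ.L ⟶ G) : Prop :=
  Mono m ∧ ∃ α : G ⟶ ρ.L', m ≫ α = ρ.tL ∧ IsPullback (𝟙 ρ.L) m ρ.tL α

section RuleEnc

variable {S : Type} {ar : S → ℕ} {X : Type}

/-- The morphism `l : K → L` of the rule encoding. -/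
noncomputable def encKtoL (ρ : TRSRule S ar X) : GLHom (interfaceG ρ.rhs) ρ.lhs.enc where
  onV v := match v with
    | .inl x => Sum.inr ⟨x.1, ρ.var_cond x.2⟩
    | .inr _ => ρ.lhs.encRoot
  onE e := e.elim
  src_comm e := e.elim
  tgt_comm e := e.elim
  lV_le v := by cases v <;> exact Flat.bot_le _
  lE_le e := e.elim

/-- The morphism `r : K → R` of the rule encoding. -/
noncomputable def encKtoR (ρ : TRSRule S ar X) : GLHom (interfaceG ρ.rhs) ρ.rhs.enc where
  onV v := match v with
    | .inl x => Sum.inr x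
    | .inr _ => ρ.rhs.encRoot
  onE e := e.elim
  src_comm e := e.elim
  tgt_comm e := e.elim
  lV_le v := by cases v <;> exact Flat.bot_le _
  lE_le e := e.elim

/-- Mapping the primed (lower-closure) vertices of `K'` to those of `L'`. -/
noncomputable def mapPrime (ρ : TRSRule S ar X) :
    ↥(interfaceVars ρ.rhs) → ↥(ρ.lhs.varHeads) :=
  fun x' => match x' with
  | ⟨.inl x, _⟩ => ⟨Sum.inr ⟨x.1, ρ.var_cond x.2⟩, ⟨⟨x.1, ρ.var_cond x.2⟩, rfl⟩⟩
  | ⟨.inr u, h⟩ => absurd h (by rintro ⟨y, hy⟩; cases hy)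

/-- The morphism `l' : K' → L'` of the rule encoding. -/
noncomputable def encl' (ρ : TRSRule S ar X) :
    GLHom (ctxCC (interfaceG ρ.rhs) (Sum.inr ()) (interfaceVars ρ.rhs))
      (ctxCC ρ.lhs.enc ρ.lhs.encRoot ρ.lhs.varHeads) where
  onV v := match v with
    | .inl (.inl (.inl x)) => .inl (.inl (Sum.inr ⟨x.1, ρ.var_cond x.2⟩))
    | .inl (.inl (.inr _)) => .inl (.inl ρ.lhs.encRoot)
    | .inl (.inr x') => .inl (.inr (mapPrime ρ x'))
    | .inr u => .inr u
  onE e := match e with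
    | .inl (.inl e) => e.elim
    | .inl (.inr (.inl x')) => .inl (.inr (.inl (mapPrime ρ x')))
    | .inl (.inr (.inr x')) => .inl (.inr (.inr (mapPrime ρ x')))
    | .inr b => .inr b
  src_comm := by
    rintro ((e | (⟨(x | u), hv⟩ | ⟨(x | u), hv⟩)) | b)
    · exact e.elim
    · rfl
    · exact absurd hv (by rintro ⟨y, hy⟩; cases hy)
    · rfl
    · exact absurd hv (by rintro ⟨y, hy⟩; cases hy)
    · rfl
  tgt_comm := by
    rintro ((e | (x' | x')) | b)
    · exact e.elim
    · rfl
    · rfl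
    · cases b <;> rfl
  lV_le := by
    rintro (((x | u) | x') | c)
    · refine Flat.le_cases (Or.inr ?_)
      refine (ctxCC_lV_inl ρ.lhs.enc ρ.lhs.encRoot ρ.lhs.varHeads
        (Sum.inr ⟨x.1, ρ.var_cond x.2⟩)).trans ?_
      rw [if_pos ⟨⟨x.1, ρ.var_cond x.2⟩, rfl⟩]
    · refine Flat.le_cases (Or.inl ?_)
      refine (ctxCC_lV_inl (interfaceG ρ.rhs) (Sum.inr ()) (interfaceVars ρ.rhs)
        (Sum.inr u)).trans ?_
      rw [if_neg (by rintro ⟨y, hy⟩; cases hy)]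
      rfl
    · exact Flat.le_cases (Or.inr rfl)
    · exact Flat.le_cases (Or.inr rfl)
  lE_le := by
    rintro ((e | (x' | x')) | b)
    · exact e.elim
    · exact Flat.le_cases (Or.inr rfl)
    · exact Flat.le_cases (Or.inr rfl)
    · exact Flat.le_cases (Or.inr rfl)

/-- The rule encoding `ρ°` of a term rewrite rule `ρ : l → r` as a PBPO⁺ rule. -/
noncomputable def ruleEnc (ρ : TRSRule S ar X) : PBPORule (FlatL S) where
  L := ρ.lhs.enc
  K := interfaceG ρ.rhs
  R := ρ.rhs.enc
  L' := ctxCC ρ.lhs.enc ρ.lhs.encRoot ρ.lhs.varHeads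
  K' := ctxCC (interfaceG ρ.rhs) (Sum.inr ()) (interfaceVars ρ.rhs)
  l := encKtoL ρ
  r := encKtoR ρ
  l' := encl' ρ
  tL := tCC ρ.lhs.enc ρ.lhs.encRoot ρ.lhs.varHeads
  tK := tCC (interfaceG ρ.rhs) (Sum.inr ()) (interfaceVars ρ.rhs)

/-- The rewrite relation of an encoded term rewriting system `R°`. -/
def SysStep (Rs : Set (TRSRule S ar X)) (G H : LGraph (FlatL S)) : Prop :=
  ∃ ρ ∈ Rs, PBPOStep (ruleEnc ρ) G H

end RuleEnc
section Cycles

variable {W : Type}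

/-- `IsUPath G u es v`: `es` is an undirected path from `u` to `v` in `G`. -/
def IsUPath (G : LGraph W) : G.V → List G.E → G.V → Prop
  | u, [], v => u = v
  | u, e :: es, v =>
      (G.src e = u ∧ IsUPath G (G.tgt e) es v) ∨ (G.tgt e = u ∧ IsUPath G (G.src e) es v)

/-- An undirected cycle at `v`: a nonempty undirected path from `v` to `v`
with pairwise distinct edges. -/
def IsUCycle (G : LGraph W) (v : G.V) (es : List G.E) : Prop :=
  es ≠ [] ∧ es.Nodup ∧ IsUPath G v es v

/-- A cycle edge is an edge lying on some undirected cycle. -/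
def CycleEdge (G : LGraph W) (e : G.E) : Prop :=
  ∃ v es, IsUCycle G v es ∧ e ∈ es

/-- A graph is cycle-free if it contains no undirected cycle. -/
def CycleFree (G : LGraph W) : Prop := ¬ ∃ v es, IsUCycle G v es

/-- `[G]`: the graph obtained from `G` by deleting all cycle edges. -/
def dropCycles (G : LGraph W) : LGraph W where
  V := G.V
  E := {e : G.E // ¬ CycleEdge G e}
  src e := G.src e.1
  tgt e := G.tgt e.1
  lV := G.lV
  lE e := G.lE e.1

end Cycles

section Zones

variable {S : Type}

/-- A vertex is in-well-formed if it has at most one incoming edge. -/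
def InWF (G : LGraph (FlatL S)) (v : G.V) : Prop :=
  ∀ e e' : G.E, G.tgt e = v → G.tgt e' = v → e = e'

/-- A vertex is out-well-formed if its label is a function symbol `f` and it
has exactly `ar f` outgoing edges, labeled `1, …, ar f`. -/
def OutWF (G : LGraph (FlatL S)) (ar : S → ℕ) (v : G.V) : Prop :=
  ∃ f : S, G.lV v = Flat.el (Sum.inl f) ∧
    ∃ φ : Fin (ar f) ≃ {e : G.E // G.src e = v},
      ∀ i, G.lE (φ i).1 = Flat.el (Sum.inr ⟨(i : ℕ) + 1, Nat.succ_pos _⟩)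

/-- A vertex is good if it is out-well-formed and all its children are
in-well-formed; otherwise it is bad. -/
def Good (G : LGraph (FlatL S)) (ar : S → ℕ) (v : G.V) : Prop :=
  OutWF G ar v ∧ ∀ e : G.E, G.src e = v → InWF G (G.tgt e)

/-- The edges included in a zone by the zoning algorithm are exactly the edges
with a good source. -/
def ZoneEdge (G : LGraph (FlatL S)) (ar : S → ℕ) (e : G.E) : Prop :=
  Good G ar (G.src e)

/-- One directed step along an edge included in a zone. -/
def ZStep (G : LGraph (FlatL S)) (ar : S → ℕ) (u v : G.V) : Prop :=
  ∃ e, ZoneEdge G ar e ∧ G.src e = u ∧ G.tgt e = v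

/-- Two vertices lie in the same zone iff they are connected by edges included
in zones (equivalence closure of `ZStep`). -/
def SameZone (G : LGraph (FlatL S)) (ar : S → ℕ) : G.V → G.V → Prop :=
  Relation.EqvGen (ZStep G ar)

/-- A root of a zone: a vertex with no parent inside its zone. -/
def IsZoneRoot (G : LGraph (FlatL S)) (ar : S → ℕ) (r : G.V) : Prop :=
  ¬ ∃ e, ZoneEdge G ar e ∧ G.tgt e = r

/-- A directed path along zone edges. -/
def IsZPath (G : LGraph (FlatL S)) (ar : S → ℕ) : G.V → List G.E → G.V → Prop
  | u, [], v => u = v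
  | u, e :: es, v => ZoneEdge G ar e ∧ G.src e = u ∧ IsZPath G ar (G.tgt e) es v

/-- The zone of `v₀`, as a subgraph of `G`, with every bad vertex relabeled
with `⊥`. -/
noncomputable def zoneTermGraph (G : LGraph (FlatL S)) (ar : S → ℕ) (v₀ : G.V) :
    LGraph (FlatL S) where
  V := {u : G.V // SameZone G ar u v₀}
  E := {e : G.E // ZoneEdge G ar e ∧ SameZone G ar (G.src e) v₀}
  src e := ⟨G.src e.1, e.2.2⟩
  tgt e := ⟨G.tgt e.1,
    Relation.EqvGen.trans _ _ _
      (Relation.EqvGen.symm _ _ (Relation.EqvGen.rel _ _ ⟨e.1, e.2.1, rfl, rfl⟩)) e.2.2⟩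
  lV u := if Good G ar u.1 then G.lV u.1 else Flat.bot
  lE e := G.lE e.1

end Zones

section Relabel

variable {W : Type}

/-- `G` with the label of vertex `v` changed to `l`. -/
noncomputable def relabelV (G : LGraph W) (v : G.V) (l : W) : LGraph W :=
  { G with lV := Function.update G.lV v l }

/-- `G` with the label of every vertex in `s` changed to `l`. -/
noncomputable def relabelSet (G : LGraph W) (s : Set G.V) (l : W) : LGraph W :=
  { G with lV := fun u => if u ∈ s then l else G.lV u }

end Relabel

/-!
A label-nondecreasing premorphism sends a symbol vertex to a vertex carrying the same symbol,
and since edge labels are incomparable it sends the `i`-th child edge of a vertex to the `i`-th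
child edge of its image. So if the root of `l°` goes to position `q` of `s`, every symbol position
`p` of `l` goes to `q ++ p`: the subterm of `s` at `q` agrees with `l` on all symbol positions
and has a subterm below every variable occurrence of `l`. By linearity of `l`, sending each
variable to the subterm below its unique occurrence is a substitution `σ` with `s|_q = lσ`.
-/

namespace Flat

variable {A : Type}

theorem el_le_el_iff {a b : A} : (el a : Flat A) ≤ el b ↔ a = b := Iff.rfl

end Flat

namespace Term

variable {S : Type} {ar : S → ℕ} {X : Type}

@[simp]
theorem sub?_nil (t : Term S ar X) : t.sub? [] = some t := by
  cases t <;> rfl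

@[simp]
theorem sub?_app_cons (f : S) (ts : Fin (ar f) → Term S ar X) (i : Fin (ar f)) (p : List ℕ) :
    (Term.app f ts).sub? ((i : ℕ) :: p) = (ts i).sub? p := by
  simp [sub?]

@[simp]
theorem symAt_app_cons (f : S) (ts : Fin (ar f) → Term S ar X) (i : Fin (ar f)) (p : List ℕ) :
    (Term.app f ts).symAt ((i : ℕ) :: p) = (ts i).symAt p := by
  simp [symAt]

theorem sub?_append_of_sub? {s u : Term S ar X} {q : List ℕ} (hu : s.sub? q = some u)
    (p : List ℕ) : s.sub? (q ++ p) = u.sub? p := by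
  rw [sub?_append, hu, Option.bind_some]

theorem symAt_append_of_sub? {s u : Term S ar X} {q : List ℕ} (hu : s.sub? q = some u)
    (p : List ℕ) : s.symAt (q ++ p) = u.symAt p := by
  rw [symAt, symAt, sub?_append_of_sub? hu]

theorem isSome_sub?_of_isSome_symAt {t : Term S ar X} {p : List ℕ}
    (h : (t.symAt p).isSome) : (t.sub? p).isSome := by
  unfold symAt at h
  cases hp : t.sub? p <;> simp_all

theorem exists_symAt_of_isSome_sub?_concat {t : Term S ar X} {p : List ℕ} {i : ℕ}
    (h : (t.sub? (p ++ [i])).isSome) : ∃ f, t.symAt p = some f ∧ i < ar f := by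
  rw [sub?_append] at h
  rcases hp : t.sub? p with _ | _ | ⟨f, ts⟩
  · simp [hp] at h
  · simp [hp, sub?] at h
  · by_cases hi : i < ar f
    · exact ⟨f, by simp [symAt, hp, head?], hi⟩
    · simp [hp, sub?, hi] at h

theorem eq_subst_of_sub? {σ : X → Term S ar X} (l : Term S ar X) :
    ∀ u : Term S ar X, (∀ p f, l.symAt p = some f → u.symAt p = some f) →
      (∀ p x, l.sub? p = some (.var x) → u.sub? p = some (σ x)) → u = l.subst σ := by
  induction l with
  | var x => exact fun u _ hvar => by simpa [subst] using hvar [] x rfl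
  | app f ts ih =>
    intro u hsym hvar
    obtain ⟨us, hus⟩ := u.symAt_sub (hsym [] f rfl)
    obtain rfl : u = .app f us := by simpa using hus
    have hchild : ∀ i, us i = (ts i).subst σ := fun i =>
      ih i (us i) (fun p g h => by simpa using hsym (i :: p) g (by simpa using h))
        (fun p x h => by simpa using hvar (i :: p) x (by simpa using h))
    simp only [subst, funext hchild]

theorem exists_ctx_of_sub? {t : Term S ar X} :
    ∀ {s : Term S ar X} {p : List ℕ}, s.sub? p = some t →
      ∃ C : Ctx S ar X, C.holePos = p ∧ s = C.fill t
  | s, [], h => ⟨.hole, rfl, by simpa [Ctx.fill] using h⟩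
  | .var _, _ :: _, h => by simp [sub?] at h
  | .app f us, i :: p, h => by
    by_cases hi : i < ar f
    · rw [show i = ((⟨i, hi⟩ : Fin (ar f)) : ℕ) from rfl, sub?_app_cons] at h
      obtain ⟨C, rfl, hC⟩ := exists_ctx_of_sub? h
      refine ⟨.app f ⟨i, hi⟩ us C, rfl, ?_⟩
      rw [Ctx.fill, ← hC, Function.update_eq_self]
    · simp [sub?, hi] at h

theorem enc_lV_inl (t : Term S ar X) {p : List ℕ} (hp : (t.symAt p).isSome) {f : S}
    (hf : t.symAt p = some f) : t.enc.lV (.inl ⟨p, hp⟩) = Flat.el (.inl f) := by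
  change (t.symAt p).elim Flat.bot _ = _
  rw [hf]
  rfl

theorem encRoot_of_isSome (t : Term S ar X) (h : (t.symAt []).isSome) :
    t.encRoot = .inl ⟨[], h⟩ :=
  dif_pos h

theorem encTgt_of_isSome (t : Term S ar X) (e : t.encE)
    (h : (t.symAt (e.1.1 ++ [e.1.2])).isSome) : t.encTgt e = .inl ⟨_, h⟩ :=
  dif_pos h

theorem val_eq_of_encTgt_eq_inl {t : Term S ar X} {e : t.encE}
    {v : {p : List ℕ // (t.symAt p).isSome}} (h : t.encTgt e = .inl v) :
    v.1 = e.1.1 ++ [e.1.2] := by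
  by_cases hs : (t.symAt (e.1.1 ++ [e.1.2])).isSome
  · rw [t.encTgt_of_isSome e hs] at h
    exact (congrArg Subtype.val (Sum.inl.inj h)).symm
  · unfold encTgt at h
    simp [hs] at h

end Term

namespace GLHom

variable {S : Type} {ar : S → ℕ} {X : Type} {l s : Term S ar X} (m : GLHom l.enc s.enc)

theorem exists_onV_eq_inl {p : List ℕ} (hp : (l.symAt p).isSome) :
    ∃ q hq, m.onV (.inl ⟨p, hp⟩) = .inl ⟨q, hq⟩ := by
  obtain ⟨f, hf⟩ := Option.isSome_iff_exists.mp hp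
  have hle := m.lV_le (.inl ⟨p, hp⟩)
  rw [l.enc_lV_inl hp hf] at hle
  rcases hv : m.onV (.inl ⟨p, hp⟩) with ⟨q, hq⟩ | x
  · exact ⟨q, hq, rfl⟩
  · rw [hv] at hle
    exact hle.elim

theorem symAt_eq_of_onV_eq_inl {p q : List ℕ} {hp : (l.symAt p).isSome}
    {hq : (s.symAt q).isSome} (hpq : m.onV (.inl ⟨p, hp⟩) = .inl ⟨q, hq⟩) :
    s.symAt q = l.symAt p := by
  obtain ⟨f, hf⟩ := Option.isSome_iff_exists.mp hp
  obtain ⟨g, hg⟩ := Option.isSome_iff_exists.mp hq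
  have hle := m.lV_le (.inl ⟨p, hp⟩)
  rw [hpq, l.enc_lV_inl hp hf, s.enc_lV_inl hq hg, Flat.el_le_el_iff, Sum.inl.injEq] at hle
  rw [hf, hg, hle]

theorem onE_val {p q : List ℕ} {hp : (l.symAt p).isSome} {hq : (s.symAt q).isSome}
    (hpq : m.onV (.inl ⟨p, hp⟩) = .inl ⟨q, hq⟩) {i : ℕ} (w : ∃ f, l.symAt p = some f ∧ i < ar f) :
    (m.onE ⟨(p, i), w⟩).1 = (q, i) := by
  rcases he : m.onE ⟨(p, i), w⟩ with ⟨⟨q', i'⟩, w'⟩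
  have hlabel := m.lE_le ⟨(p, i), w⟩
  rw [he] at hlabel
  have hsrc := m.src_comm ⟨(p, i), w⟩
  rw [he] at hsrc
  change Sum.inl _ = m.onV (.inl ⟨p, hp⟩) at hsrc
  rw [hpq, Sum.inl.injEq, Subtype.mk.injEq] at hsrc
  change Sum.inr _ = Sum.inr _ at hlabel
  have hi : i + 1 = i' + 1 := congrArg Subtype.val (Sum.inr.inj hlabel)
  simp only at hsrc
  change (q', i') = (q, i)
  rw [hsrc, Nat.add_right_cancel hi]

theorem isSome_sub?_concat {p q : List ℕ} {hp : (l.symAt p).isSome} {hq : (s.symAt q).isSome}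
    (hpq : m.onV (.inl ⟨p, hp⟩) = .inl ⟨q, hq⟩) {i : ℕ} (w : ∃ f, l.symAt p = some f ∧ i < ar f) :
    (s.sub? (q ++ [i])).isSome := by
  have hw := (m.onE ⟨(p, i), w⟩).2
  rw [m.onE_val hpq w] at hw
  obtain ⟨u, hu⟩ := s.edge_sub?_isSome hw
  simp [hu]

theorem onV_concat {p q : List ℕ} {hp : (l.symAt p).isSome} {hq : (s.symAt q).isSome}
    (hpq : m.onV (.inl ⟨p, hp⟩) = .inl ⟨q, hq⟩) {i : ℕ} (hc : (l.symAt (p ++ [i])).isSome) :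
    ∃ hc', m.onV (.inl ⟨p ++ [i], hc⟩) = .inl ⟨q ++ [i], hc'⟩ := by
  obtain ⟨f, hf, hi⟩ :=
    Term.exists_symAt_of_isSome_sub?_concat (Term.isSome_sub?_of_isSome_symAt hc)
  have htgt := m.tgt_comm ⟨(p, i), f, hf, hi⟩
  obtain ⟨q', hq', hc'⟩ := m.exists_onV_eq_inl hc
  have hlt : l.enc.tgt ⟨(p, i), f, hf, hi⟩ = .inl ⟨p ++ [i], hc⟩ := l.encTgt_of_isSome _ hc
  rw [hlt, hc'] at htgt
  have hq'_val := Term.val_eq_of_encTgt_eq_inl htgt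
  rw [m.onE_val hpq] at hq'_val
  subst hq'_val
  exact ⟨hq', hc'⟩

variable {q : List ℕ} {hr : (l.symAt []).isSome} {hq : (s.symAt q).isSome}

theorem onV_eq_inl_append (h0 : m.onV (.inl ⟨[], hr⟩) = .inl ⟨q, hq⟩) (p : List ℕ)
    (hp : (l.symAt p).isSome) : ∃ hq', m.onV (.inl ⟨p, hp⟩) = .inl ⟨q ++ p, hq'⟩ := by
  induction p using List.reverseRecOn with
  | nil => exact ⟨by simpa using hq, by simpa using h0⟩
  | append_singleton p i ih =>
    obtain ⟨f, hf, -⟩ :=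
      Term.exists_symAt_of_isSome_sub?_concat (Term.isSome_sub?_of_isSome_symAt hp)
    obtain ⟨_, hpq⟩ := ih (by simp [hf])
    obtain ⟨hc', hc⟩ := m.onV_concat hpq hp
    exact ⟨by simpa using hc', hc.trans (congrArg _ (Subtype.ext (List.append_assoc _ _ _)))⟩

theorem isSome_sub?_append (h0 : m.onV (.inl ⟨[], hr⟩) = .inl ⟨q, hq⟩) (p : List ℕ)
    (hp : (l.sub? p).isSome) : (s.sub? (q ++ p)).isSome := by
  rcases List.eq_nil_or_concat' p with rfl | ⟨p, i, rfl⟩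
  · simpa using Term.isSome_sub?_of_isSome_symAt hq
  · obtain ⟨f, hf, hi⟩ := Term.exists_symAt_of_isSome_sub?_concat hp
    obtain ⟨_, hpq⟩ := m.onV_eq_inl_append h0 p (by simp [hf])
    simpa using m.isSome_sub?_concat hpq ⟨f, hf, hi⟩

theorem exists_sub?_eq_subst (hl : l.Linear) (h0 : m.onV (.inl ⟨[], hr⟩) = .inl ⟨q, hq⟩) :
    ∃ σ : X → Term S ar X, s.sub? q = some (l.subst σ) := by
  obtain ⟨u, hu⟩ := Option.isSome_iff_exists.mp (Term.isSome_sub?_of_isSome_symAt hq)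
  let σ : X → Term S ar X := fun x =>
    if hx : x ∈ l.vars then (s.sub? (q ++ hx.choose)).getD (.var x) else .var x
  refine ⟨σ, hu.trans (congrArg some (Term.eq_subst_of_sub? l u ?_ ?_))⟩
  · intro p f hf
    obtain ⟨_, hpq⟩ := m.onV_eq_inl_append h0 p (by simp [hf])
    rw [← Term.symAt_append_of_sub? hu, m.symAt_eq_of_onV_eq_inl hpq, hf]
  · intro p x hx
    obtain ⟨v, hv⟩ := Option.isSome_iff_exists.mp (m.isSome_sub?_append h0 p (by simp [hx]))
    have hmem : x ∈ l.vars := ⟨p, hx⟩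
    have hpos : hmem.choose = p := hl x _ p hmem.choose_spec hx
    rw [← Term.sub?_append_of_sub? hu, hv]
    simp only [σ, dif_pos hmem, hpos, hv, Option.getD_some]

end GLHom

theorem statement_3_general {S : Type} {ar : S → ℕ} {X : Type}
    (l s : Term S ar X) (hl : l.Linear) (hlv : ∀ x, l ≠ Term.var x)
    (m : l.enc ⟶ s.enc) :
    ∃ (C : Ctx S ar X) (σ : X → Term S ar X),
      s = C.fill (l.subst σ) ∧ s.encVertAt C.holePos (homV m l.encRoot) := by
  have hr : (l.symAt []).isSome := by
    cases l with
    | var x => exact absurd rfl (hlv x)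
    | app f ts => rfl
  obtain ⟨q, hq, h0⟩ := GLHom.exists_onV_eq_inl m hr
  obtain ⟨σ, hσ⟩ := GLHom.exists_sub?_eq_subst m hl h0
  obtain ⟨C, rfl, hC⟩ := Term.exists_ctx_of_sub? hσ
  refine ⟨C, σ, hC, ?_⟩
  change s.encVertAt C.holePos (m.onV l.encRoot)
  rw [Term.encRoot_of_isSome l hr, h0]
  rfl

/-- If `m : l° → s°` is a monomorphism (for linear terms `l, s`
with `l` not a variable), then `s = C[lσ]` for some context `C` and
substitution `σ`, and the position of `m(root(l°))` in `s°` is the position of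
the hole of `C`. -/
theorem statement_3 {S : Type} {ar : S → ℕ} {X : Type}
    (l s : Term S ar X) (hl : l.Linear) (hlv : ∀ x, l ≠ Term.var x) (hs : s.Linear)
    (m : l.enc ⟶ s.enc) (hm : Mono m) :
    ∃ (C : Ctx S ar X) (σ : X → Term S ar X),
      s = C.fill (l.subst σ) ∧ s.encVertAt C.holePos (homV m l.encRoot) :=
  statement_3_general l s hl hlv m
end
end

section
/- Within a zone Z of a finite Σ°-labeled graph G, for any two vertices u and v of Z there is a vertex x of Z such that there are directed paths from x to u and from x to v using only edges included in Z. -/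
open CategoryTheory
open Classical

noncomputable section

/-!
A zone edge ends in an in-well-formed vertex, so every vertex has at most one parent along
zone edges. The ancestors of a vertex therefore form a chain, and two vertices with a common
descendant are comparable. Following the equivalence closure that defines the zone, in a
transitive step `a ~ b ~ c` with common ancestors `x` of `a, b` and `y` of `b, c`, the higher
of `x` and `y` is a common ancestor of `a` and `c`.
-/

namespace Relation

variable {α : Type*} {r : α → α → Prop} {a b c : α}

theorem ReflTransGen.total_of_left_unique (U : Relator.LeftUnique r)
    (ac : ReflTransGen r a c) (bc : ReflTransGen r b c) :
    ReflTransGen r a b ∨ ReflTransGen r b a := by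
  have h := ReflTransGen.total_of_right_unique (r := Function.swap r) (fun _ _ _ h h' => U h h')
    (reflTransGen_swap.mpr ac) (reflTransGen_swap.mpr bc)
  simpa only [reflTransGen_swap, or_comm] using h

theorem EqvGen.exists_common_ancestor_of_left_unique (U : Relator.LeftUnique r)
    (h : EqvGen r a b) : ∃ x, ReflTransGen r x a ∧ ReflTransGen r x b := by
  induction h with
  | rel a b hab => exact ⟨a, .refl, .single hab⟩
  | refl a => exact ⟨a, .refl, .refl⟩
  | symm a b _ ih =>
    obtain ⟨x, hxa, hxb⟩ := ih
    exact ⟨x, hxb, hxa⟩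
  | trans a b c _ _ ihab ihbc =>
    obtain ⟨x, hxa, hxb⟩ := ihab
    obtain ⟨y, hyb, hyc⟩ := ihbc
    rcases hxb.total_of_left_unique U hyb with hxy | hyx
    · exact ⟨x, hxa, hxy.trans hyc⟩
    · exact ⟨y, hyx.trans hxa, hyc⟩

end Relation

theorem ZStep.left_unique {S : Type} (ar : S → ℕ) (G : LGraph (FlatL S)) :
    Relator.LeftUnique (ZStep G ar) := by
  rintro a b c ⟨e, he, rfl, hec⟩ ⟨e', -, rfl, he'c⟩
  have hc : InWF G c := hec ▸ he.2 e rfl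
  rw [hc e e' hec he'c]

theorem statement_12_general {S : Type} (ar : S → ℕ) (G : LGraph (FlatL S))
    (u v : G.V) (huv : SameZone G ar u v) :
    ∃ x : G.V, SameZone G ar x u ∧
      Relation.ReflTransGen (ZStep G ar) x u ∧
      Relation.ReflTransGen (ZStep G ar) x v := by
  obtain ⟨x, hxu, hxv⟩ := huv.exists_common_ancestor_of_left_unique (ZStep.left_unique ar G)
  exact ⟨x, Relation.EqvGen.reflTransGen_le_eqvGen _ _ _ hxu, hxu, hxv⟩

/-- Within a zone `Z` of a finite `Σ°`-labeled graph `G`, for any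
two vertices `u` and `v` of `Z` there is a vertex `x` of `Z` with directed
paths from `x` to `u` and from `x` to `v` using only edges included in `Z`. -/
theorem statement_12 {S : Type} (ar : S → ℕ) (G : LGraph (FlatL S))
    (hfin : FiniteG G) (u v : G.V) (huv : SameZone G ar u v) :
    ∃ x : G.V, SameZone G ar x u ∧
      Relation.ReflTransGen (ZStep G ar) x u ∧
      Relation.ReflTransGen (ZStep G ar) x v :=
  statement_12_general ar G u v huv
end
end
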